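/- arXiv:1602.07824 — 4 statements merged into one kernel-verified Lean document; each statement's English description precedes it below -/
import Mathlib

section
/- Suppose λ : [0,T) → (0,∞) is differentiable and satisfies (2/3)R(t) - 2ρ₁(t) ≤ λ'(t)/λ(t) ≤ (2/3)R(t) - 2ρ₂(t), where for the Heisenberg solution R(t) = -(1/2)A(t)², ρ₁(t) = (1/2)A(t)³, ρ₂(t) = -(1/2)A(t)²B(t) with A, B as in the explicit Heisenberg backward Ricci flow solution. Then for t ∈ [0, -3/(16R₀)), λ(0)·exp((3A₀/4)[1-(1+(16R₀t)/3)^{-1/2}])·(1+(16R₀t)/3)^{1/8} ≤ λ(t) ≤ λ(0)·exp((3B₀/2)[1-(1+(16R₀t)/3)^{1/4}])·(1+(16R₀t)/3)^{1/8}. -/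
/-!
Put `u = 1 + (16/3) R₀ t`, so `A = A₀ u^{-1/2}`, `B = B₀ u^{1/4}` and
`u' = (16/3) R₀ = -(8/3) A₀²`.
Both bounds on `λ'/λ` are then exact derivatives:
`(2/3)R - 2ρ₁ = d/dt [(3A₀/4)(1 - u^{-1/2}) + (log u)/8]` and
`(2/3)R - 2ρ₂ = d/dt [(3B₀/2)(1 - u^{1/4}) + (log u)/8]`.
Comparing `log λ` with these primitives on `[0, t]` (mean value theorem) and exponentiating gives
the two bounds.
-/

open Real Set

lemma sub_le_sub_of_hasDerivAt_le {u v u' v' : ℝ → ℝ} {a b : ℝ} (hab : a ≤ b)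
    (hu : ∀ s ∈ Icc a b, HasDerivAt u (u' s) s) (hv : ∀ s ∈ Icc a b, HasDerivAt v (v' s) s)
    (hle : ∀ s ∈ Icc a b, u' s ≤ v' s) : u b - u a ≤ v b - v a := by
  have hderiv : ∀ s ∈ Icc a b, HasDerivAt (fun x => v x - u x) (v' s - u' s) s :=
    fun s hs => (hv s hs).sub (hu s hs)
  have hmono : MonotoneOn (fun x => v x - u x) (Icc a b) :=
    monotoneOn_of_hasDerivWithinAt_nonneg (convex_Icc a b)
      (fun s hs => (hderiv s hs).continuousAt.continuousWithinAt)
      (fun s hs => (hderiv s (interior_subset hs)).hasDerivWithinAt)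
      (fun s hs => sub_nonneg.2 (hle s (interior_subset hs)))
  have := hmono (left_mem_Icc.2 hab) (right_mem_Icc.2 hab) hab
  linarith

lemma mul_exp_log_sub_log {x y : ℝ} (hx : 0 < x) (hy : 0 < y) :
    x * exp (log y - log x) = y := by
  rw [exp_sub, exp_log hx, exp_log hy]
  field_simp

section LogDerivComparison

variable {lam lam' F f : ℝ → ℝ} {a b : ℝ}

lemma mul_exp_sub_le_of_le_logDeriv (hab : a ≤ b) (hpos : ∀ s ∈ Icc a b, 0 < lam s)
    (hlam : ∀ s ∈ Icc a b, HasDerivAt lam (lam' s) s)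
    (hF : ∀ s ∈ Icc a b, HasDerivAt F (f s) s)
    (hle : ∀ s ∈ Icc a b, f s ≤ lam' s / lam s) :
    lam a * exp (F b - F a) ≤ lam b := by
  have ha := hpos a (left_mem_Icc.2 hab)
  have hlog : F b - F a ≤ log (lam b) - log (lam a) :=
    sub_le_sub_of_hasDerivAt_le hab hF (fun s hs => (hlam s hs).log (hpos s hs).ne') hle
  calc lam a * exp (F b - F a) ≤ lam a * exp (log (lam b) - log (lam a)) := by gcongr
    _ = lam b := mul_exp_log_sub_log ha (hpos b (right_mem_Icc.2 hab))

lemma le_mul_exp_sub_of_logDeriv_le (hab : a ≤ b) (hpos : ∀ s ∈ Icc a b, 0 < lam s)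
    (hlam : ∀ s ∈ Icc a b, HasDerivAt lam (lam' s) s)
    (hF : ∀ s ∈ Icc a b, HasDerivAt F (f s) s)
    (hle : ∀ s ∈ Icc a b, lam' s / lam s ≤ f s) :
    lam b ≤ lam a * exp (F b - F a) := by
  have ha := hpos a (left_mem_Icc.2 hab)
  have hlog : log (lam b) - log (lam a) ≤ F b - F a :=
    sub_le_sub_of_hasDerivAt_le hab (fun s hs => (hlam s hs).log (hpos s hs).ne') hF hle
  calc lam b = lam a * exp (log (lam b) - log (lam a)) :=
        (mul_exp_log_sub_log ha (hpos b (right_mem_Icc.2 hab))).symm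
    _ ≤ lam a * exp (F b - F a) := by gcongr

end LogDerivComparison

noncomputable def heisenbergLogProfile (K p c s : ℝ) : ℝ :=
  K * (1 - (1 + c * s) ^ p) + log (1 + c * s) / 8

section Profile

variable (K p c : ℝ) {s : ℝ}

lemma heisenbergLogProfile_zero : heisenbergLogProfile K p c 0 = 0 := by
  simp [heisenbergLogProfile]

lemma hasDerivAt_heisenbergLogProfile (hs : 0 < 1 + c * s) :
    HasDerivAt (heisenbergLogProfile K p c)
      (-(K * p * c) * (1 + c * s) ^ (p - 1) + c / (8 * (1 + c * s))) s := by
  have hu : HasDerivAt (fun x => 1 + c * x) c s := by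
    simpa using ((hasDerivAt_id s).const_mul c).const_add 1
  refine HasDerivAt.congr_deriv
    ((((hu.rpow_const (p := p) (Or.inl hs.ne')).const_sub 1).const_mul K).add
      ((hu.log hs.ne').div_const 8)) ?_
  rw [div_div, mul_comm 8]
  ring

lemma exp_heisenbergLogProfile (hs : 0 < 1 + c * s) :
    exp (heisenbergLogProfile K p c s)
      = exp (K * (1 - (1 + c * s) ^ p)) * (1 + c * s) ^ (1/8 : ℝ) := by
  rw [rpow_def_of_pos hs (1/8 : ℝ), heisenbergLogProfile, exp_add, div_eq_mul_one_div (log _)]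

end Profile

lemma heisenberg_lower_rate (A₀ : ℝ) {u : ℝ} (hu : 0 < u) :
    2/3 * (-(1/2) * (A₀ * u ^ (-(1/2) : ℝ)) ^ 2) - 2 * (1/2 * (A₀ * u ^ (-(1/2) : ℝ)) ^ 3)
      = -(3 * A₀ / 4 * (-(1/2)) * (16/3 * (-(1/2) * A₀ ^ 2))) * u ^ ((-(1/2) : ℝ) - 1)
        + 16/3 * (-(1/2) * A₀ ^ 2) / (8 * u) := by
  have h2 : (u ^ (-(1/2) : ℝ)) ^ 2 = u⁻¹ := by
    rw [← rpow_natCast, ← rpow_mul hu.le]; norm_num [rpow_neg_one]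
  have h3 : (u ^ (-(1/2) : ℝ)) ^ 3 = u ^ ((-(1/2) : ℝ) - 1) := by
    rw [← rpow_natCast, ← rpow_mul hu.le]; norm_num
  rw [mul_pow, mul_pow, h2, h3]
  field_simp
  ring

lemma heisenberg_upper_rate (A₀ B₀ : ℝ) {u : ℝ} (hu : 0 < u) :
    2/3 * (-(1/2) * (A₀ * u ^ (-(1/2) : ℝ)) ^ 2)
        - 2 * (-(1/2) * (A₀ * u ^ (-(1/2) : ℝ)) ^ 2 * (B₀ * u ^ (1/4 : ℝ)))
      = -(3 * B₀ / 2 * (1/4) * (16/3 * (-(1/2) * A₀ ^ 2))) * u ^ ((1/4 : ℝ) - 1)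
        + 16/3 * (-(1/2) * A₀ ^ 2) / (8 * u) := by
  have h2 : (u ^ (-(1/2) : ℝ)) ^ 2 = u⁻¹ := by
    rw [← rpow_natCast, ← rpow_mul hu.le]; norm_num [rpow_neg_one]
  have h34 : u⁻¹ * u ^ (1/4 : ℝ) = u ^ ((1/4 : ℝ) - 1) := by
    rw [rpow_sub_one hu.ne']; field_simp
  rw [mul_pow, h2, ← h34]
  field_simp
  ring

lemma one_add_mul_pos_of_lt_blowup_time {R₀ s : ℝ} (hR₀ : R₀ < 0)
    (hs : s < -3 / (16 * R₀)) :
    0 < 1 + 16/3 * R₀ * s := by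
  rw [lt_div_iff_of_neg (by linarith)] at hs
  linarith

theorem stmt_3_general (A₀ B₀ R₀ : ℝ) (hA₀ : 0 < A₀)
    (hR₀ : R₀ = -(1/2) * A₀ ^ 2)
    (A B R ρ₁ ρ₂ : ℝ → ℝ)
    (hA : ∀ t, A t = A₀ * (1 + (16/3) * R₀ * t) ^ (-(1/2) : ℝ))
    (hB : ∀ t, B t = B₀ * (1 + (16/3) * R₀ * t) ^ ((1/4) : ℝ))
    (hR : ∀ t, R t = -(1/2) * (A t) ^ 2)
    (hρ₁ : ∀ t, ρ₁ t = (1/2) * (A t) ^ 3)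
    (hρ₂ : ∀ t, ρ₂ t = -(1/2) * (A t) ^ 2 * B t)
    (lam lam' : ℝ → ℝ)
    (hpos : ∀ t ∈ Set.Ico (0 : ℝ) (-3 / (16 * R₀)), 0 < lam t)
    (hderiv : ∀ t ∈ Set.Ico (0 : ℝ) (-3 / (16 * R₀)), HasDerivAt lam (lam' t) t)
    (hlow : ∀ t ∈ Set.Ico (0 : ℝ) (-3 / (16 * R₀)),
      (2/3) * R t - 2 * ρ₁ t ≤ lam' t / lam t)
    (hup : ∀ t ∈ Set.Ico (0 : ℝ) (-3 / (16 * R₀)),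
      lam' t / lam t ≤ (2/3) * R t - 2 * ρ₂ t) :
    ∀ t ∈ Set.Ico (0 : ℝ) (-3 / (16 * R₀)),
      lam 0 * Real.exp ((3 * A₀ / 4) * (1 - (1 + 16 * R₀ * t / 3) ^ (-(1/2) : ℝ)))
          * (1 + 16 * R₀ * t / 3) ^ ((1/8) : ℝ) ≤ lam t ∧
      lam t ≤ lam 0 * Real.exp ((3 * B₀ / 2) * (1 - (1 + 16 * R₀ * t / 3) ^ ((1/4) : ℝ)))
          * (1 + 16 * R₀ * t / 3) ^ ((1/8) : ℝ) := by
  intro t ⟨ht0, htT⟩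
  have hR₀neg : R₀ < 0 := by nlinarith [pow_pos hA₀ 2]
  subst hR₀
  have hsub : Icc 0 t ⊆ Ico 0 (-3 / (16 * (-(1/2) * A₀ ^ 2))) :=
    fun s hs => ⟨hs.1, hs.2.trans_lt htT⟩
  have hu : ∀ s ∈ Icc 0 t, 0 < 1 + 16/3 * (-(1/2) * A₀ ^ 2) * s :=
    fun s hs => one_add_mul_pos_of_lt_blowup_time hR₀neg (hsub hs).2
  have hut := hu t (right_mem_Icc.2 ht0)
  have hlower := mul_exp_sub_le_of_le_logDeriv ht0 (fun s hs => hpos s (hsub hs))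
    (fun s hs => hderiv s (hsub hs))
    (fun s hs => hasDerivAt_heisenbergLogProfile (3 * A₀ / 4) (-(1/2)) _ (hu s hs))
    fun s hs => by
      have := hlow s (hsub hs)
      rwa [hR, hρ₁, hA, heisenberg_lower_rate A₀ (hu s hs)] at this
  have hupper := le_mul_exp_sub_of_logDeriv_le ht0 (fun s hs => hpos s (hsub hs))
    (fun s hs => hderiv s (hsub hs))
    (fun s hs => hasDerivAt_heisenbergLogProfile (3 * B₀ / 2) (1/4) _ (hu s hs))
    fun s hs => by
      have := hup s (hsub hs)
      rwa [hR, hρ₂, hA, hB, heisenberg_upper_rate A₀ B₀ (hu s hs)] at this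
  rw [heisenbergLogProfile_zero, sub_zero, exp_heisenbergLogProfile _ _ _ hut, ← mul_assoc]
    at hlower hupper
  rw [show 1 + 16 * (-(1/2) * A₀ ^ 2) * t / 3 = 1 + 16/3 * (-(1/2) * A₀ ^ 2) * t by ring]
  exact ⟨hlower, hupper⟩

/-- Heisenberg eigenvalue estimate: if `λ` satisfies the differential inequality
`(2/3)R - 2ρ₁ ≤ λ'/λ ≤ (2/3)R - 2ρ₂` along the explicit Heisenberg backward
Ricci flow solution, then the stated two-sided bound holds on `[0, -3/(16R₀))`. -/
theorem stmt_3 (A₀ B₀ R₀ : ℝ) (hA₀ : 0 < A₀) (hB₀ : 0 < B₀)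
    (hR₀ : R₀ = -(1/2) * A₀ ^ 2)
    (A B R ρ₁ ρ₂ : ℝ → ℝ)
    (hA : ∀ t, A t = A₀ * (1 + (16/3) * R₀ * t) ^ (-(1/2) : ℝ))
    (hB : ∀ t, B t = B₀ * (1 + (16/3) * R₀ * t) ^ ((1/4) : ℝ))
    (hR : ∀ t, R t = -(1/2) * (A t) ^ 2)
    (hρ₁ : ∀ t, ρ₁ t = (1/2) * (A t) ^ 3)
    (hρ₂ : ∀ t, ρ₂ t = -(1/2) * (A t) ^ 2 * B t)
    (lam lam' : ℝ → ℝ)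
    (hpos : ∀ t ∈ Set.Ico (0 : ℝ) (-3 / (16 * R₀)), 0 < lam t)
    (hderiv : ∀ t ∈ Set.Ico (0 : ℝ) (-3 / (16 * R₀)), HasDerivAt lam (lam' t) t)
    (hlow : ∀ t ∈ Set.Ico (0 : ℝ) (-3 / (16 * R₀)),
      (2/3) * R t - 2 * ρ₁ t ≤ lam' t / lam t)
    (hup : ∀ t ∈ Set.Ico (0 : ℝ) (-3 / (16 * R₀)),
      lam' t / lam t ≤ (2/3) * R t - 2 * ρ₂ t) :
    ∀ t ∈ Set.Ico (0 : ℝ) (-3 / (16 * R₀)),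
      lam 0 * Real.exp ((3 * A₀ / 4) * (1 - (1 + 16 * R₀ * t / 3) ^ (-(1/2) : ℝ)))
          * (1 + 16 * R₀ * t / 3) ^ ((1/8) : ℝ) ≤ lam t ∧
      lam t ≤ lam 0 * Real.exp ((3 * B₀ / 2) * (1 - (1 + 16 * R₀ * t / 3) ^ ((1/4) : ℝ)))
          * (1 + 16 * R₀ * t / 3) ^ ((1/8) : ℝ) :=
  stmt_3_general A₀ B₀ R₀ hA₀ hR₀ A B R ρ₁ ρ₂ hA hB hR hρ₁ hρ₂ lam lam' hpos hderiv hlow hup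
end

section
/- Let A, B, C : [0,T₊) → (0,∞) satisfy the E(2) backward Ricci flow system A' = (2/3)A(2A+B)(A-B), B' = -(2/3)B(2B+A)(A-B), C' = -(2/3)C(A-B)². Then (d/dt) ln(C/B) = 2B(A-B); hence if A(0) > B(0) and C(0) ≥ B(0), then C(t) > B(t) for all t > 0. -/
/-!
Along the flow `D = A - B` satisfies the linear equation `D' = (4/3)(A² + AB + B²) D`, whose
coefficient is nonnegative, so `D` cannot decrease while it is positive and stays above the
barrier `D(0) e^{-t}`. Hence `A > B` persists, and `(ln(C/B))' = 2B(A - B) > 0` makes `C/B`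
strictly increasing from `C(0)/B(0) ≥ 1`.
-/

open Set Real

theorem pos_of_deriv_nonneg_where_pos {D D' : ℝ → ℝ} {a b : ℝ}
    (hD : ∀ x ∈ Icc a b, HasDerivAt D (D' x) x)
    (hD' : ∀ x ∈ Icc a b, 0 < D x → 0 ≤ D' x) (ha : 0 < D a) :
    ∀ x ∈ Icc a b, 0 < D x := by
  have hbarrier : ∀ x, HasDerivAt (fun y => D a * exp (a - y)) (-(D a * exp (a - x))) x :=
    fun x => (((hasDerivAt_id x).const_sub a).exp.const_mul (D a)).congr_deriv (by simp)
  have hle := image_le_of_deriv_right_lt_deriv_boundary'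
    (fun x _ => (hbarrier x).continuousAt.continuousWithinAt)
    (fun x _ => (hbarrier x).hasDerivWithinAt) (by simp)
    (fun x hx => (hD x hx).continuousAt.continuousWithinAt)
    (fun x hx => (hD x (Ico_subset_Icc_self hx)).hasDerivWithinAt)
    (fun x hx hx_eq => by
      have hpos : 0 < D a * exp (a - x) := mul_pos ha (exp_pos _)
      have := hD' x (Ico_subset_Icc_self hx) (hx_eq ▸ hpos)
      linarith)
  exact fun x hx => (mul_pos ha (exp_pos _)).trans_le (hle hx)

theorem HasDerivAt.log_div {B C : ℝ → ℝ} {B' C' t : ℝ} (hB : HasDerivAt B B' t)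
    (hC : HasDerivAt C C' t) (hBt : B t ≠ 0) (hCt : C t ≠ 0) :
    HasDerivAt (fun s => Real.log (C s / B s)) (C' / C t - B' / B t) t :=
  ((hC.div hB hBt).log (div_ne_zero hCt hBt)).congr_deriv (by rw [Pi.div_apply]; field_simp)

theorem e2_flow_lt_of_lt_at_zero {T : ℝ} {A B : ℝ → ℝ}
    (hA : ∀ t ∈ Ico (0 : ℝ) T,
      HasDerivAt A ((2/3) * A t * (2 * A t + B t) * (A t - B t)) t)
    (hB : ∀ t ∈ Ico (0 : ℝ) T,
      HasDerivAt B (-(2/3) * B t * (2 * B t + A t) * (A t - B t)) t)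
    (h0 : B 0 < A 0) : ∀ t ∈ Ico (0 : ℝ) T, B t < A t := by
  intro t ht
  have hIcc : Icc 0 t ⊆ Ico 0 T := Icc_subset_Ico_right ht.2
  have hD : ∀ s ∈ Icc 0 t, HasDerivAt (fun s => A s - B s)
      ((4/3) * (A s ^ 2 + A s * B s + B s ^ 2) * (A s - B s)) s := by
    intro s hs
    exact ((hA s (hIcc hs)).sub (hB s (hIcc hs))).congr_deriv (by ring)
  have hD' : ∀ s ∈ Icc 0 t,
      0 < A s - B s → 0 ≤ (4/3) * (A s ^ 2 + A s * B s + B s ^ 2) * (A s - B s) := by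
    intro s _ hpos
    have : 0 ≤ A s ^ 2 + A s * B s + B s ^ 2 := by
      nlinarith [sq_nonneg (A s + B s), sq_nonneg (A s), sq_nonneg (B s)]
    positivity
  exact sub_pos.mp (pos_of_deriv_nonneg_where_pos hD hD' (sub_pos.mpr h0) t ⟨ht.1, le_rfl⟩)

theorem stmt_13_general (T : ℝ) (A B C : ℝ → ℝ)
    (hBpos : ∀ t ∈ Set.Ico (0 : ℝ) T, 0 < B t)
    (hCpos : ∀ t ∈ Set.Ico (0 : ℝ) T, 0 < C t)
    (hA : ∀ t ∈ Set.Ico (0 : ℝ) T,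
      HasDerivAt A ((2/3) * A t * (2 * A t + B t) * (A t - B t)) t)
    (hB : ∀ t ∈ Set.Ico (0 : ℝ) T,
      HasDerivAt B (-(2/3) * B t * (2 * B t + A t) * (A t - B t)) t)
    (hC : ∀ t ∈ Set.Ico (0 : ℝ) T,
      HasDerivAt C (-(2/3) * C t * (A t - B t) ^ 2) t) :
    (∀ t ∈ Set.Ico (0 : ℝ) T,
      HasDerivAt (fun s => Real.log (C s / B s)) (2 * B t * (A t - B t)) t) ∧
    (B 0 < A 0 → B 0 ≤ C 0 → ∀ t ∈ Set.Ioo (0 : ℝ) T, B t < C t) := by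
  have hlog : ∀ t ∈ Ico (0 : ℝ) T,
      HasDerivAt (fun s => log (C s / B s)) (2 * B t * (A t - B t)) t := by
    intro t ht
    refine ((hB t ht).log_div (hC t ht) (hBpos t ht).ne' (hCpos t ht).ne').congr_deriv ?_
    field_simp [(hBpos t ht).ne', (hCpos t ht).ne']
    ring
  refine ⟨hlog, fun hAB hBC t ht => ?_⟩
  have hIcc : Icc 0 t ⊆ Ico 0 T := Icc_subset_Ico_right ht.2
  have hmono : StrictMonoOn (fun s => log (C s / B s)) (Icc 0 t) := by
    refine strictMonoOn_of_deriv_pos (convex_Icc 0 t)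
      (fun s hs => (hlog s (hIcc hs)).continuousAt.continuousWithinAt) fun s hs => ?_
    rw [interior_Icc] at hs
    have hs' := hIcc (Ioo_subset_Icc_self hs)
    rw [(hlog s hs').deriv]
    have := hBpos s hs'
    have := sub_pos.mpr (e2_flow_lt_of_lt_at_zero hA hB hAB s hs')
    positivity
  have h0 : (0 : ℝ) ∈ Icc 0 t := left_mem_Icc.mpr ht.1.le
  have ht' : t ∈ Icc 0 t := right_mem_Icc.mpr ht.1.le
  have hB0 := hBpos 0 (hIcc h0)
  have hBt := hBpos t (hIcc ht')
  have hratio : 1 < C t / B t := by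
    rw [← log_pos_iff (div_pos (hCpos t (hIcc ht')) hBt).le]
    exact (log_nonneg ((one_le_div hB0).mpr hBC)).trans_lt (hmono h0 ht' ht.1)
  exact (one_lt_div hBt).mp hratio

/-- E(2): `(d/dt) ln(C/B) = 2B(A-B)`; hence if `A(0) > B(0)` and `C(0) ≥ B(0)`,
then `C(t) > B(t)` for all `t > 0`. -/
theorem stmt_13 (T : ℝ) (hT : 0 < T) (A B C : ℝ → ℝ)
    (hApos : ∀ t ∈ Set.Ico (0 : ℝ) T, 0 < A t)
    (hBpos : ∀ t ∈ Set.Ico (0 : ℝ) T, 0 < B t)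
    (hCpos : ∀ t ∈ Set.Ico (0 : ℝ) T, 0 < C t)
    (hA : ∀ t ∈ Set.Ico (0 : ℝ) T,
      HasDerivAt A ((2/3) * A t * (2 * A t + B t) * (A t - B t)) t)
    (hB : ∀ t ∈ Set.Ico (0 : ℝ) T,
      HasDerivAt B (-(2/3) * B t * (2 * B t + A t) * (A t - B t)) t)
    (hC : ∀ t ∈ Set.Ico (0 : ℝ) T,
      HasDerivAt C (-(2/3) * C t * (A t - B t) ^ 2) t) :
    (∀ t ∈ Set.Ico (0 : ℝ) T,
      HasDerivAt (fun s => Real.log (C s / B s)) (2 * B t * (A t - B t)) t) ∧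
    (B 0 < A 0 → B 0 ≤ C 0 → ∀ t ∈ Set.Ioo (0 : ℝ) T, B t < C t) :=
  stmt_13_general T A B C hBpos hCpos hA hB hC
end

section
/- Let A, B, C : [0,T₊) → (0,∞) satisfy the SL(2,ℝ) backward Ricci flow system A' = -(2/3)[-A²(2A+B+C) + A(B-C)²], B' = -(2/3)[-B²(2B+A-C) + B(A+C)²], C' = -(2/3)[-C²(2C+A-B) + C(A+B)²]. Then (d/dt)(B-C) = (2/3)[2(B³-C³) + A(B²-C²) - A²(B-C)]; hence if B(0) ≥ C(0), then B(t) ≥ C(t) for all t ∈ [0,T₊). -/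
/-!
The difference `B - C` solves a linear equation `(B - C)' = g · (B - C)`, since
`2(B³ - C³) + A(B² - C²) - A²(B - C)` is divisible by `B - C`. With `G` a primitive of `g`,
`(B - C) · exp (-G)` has zero derivative, so `B - C` keeps the sign of its initial value.
-/

open Set Real Topology

section LinearODE

variable {f g : ℝ → ℝ} {a b : ℝ}

theorem hasDerivWithinAt_integral_Ici_of_continuousOn (hg : ContinuousOn g (Icc a b))
    {x : ℝ} (hx : x ∈ Ico a b) :
    HasDerivWithinAt (fun t => ∫ s in a..t, g s) (g x) (Ici x) x := by
  have hIcc : Icc a b ∈ 𝓝[>] x := Icc_mem_nhdsGT_of_mem hx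
  have hint : IntervalIntegrable g MeasureTheory.volume a x :=
    (hg.mono (Icc_subset_Icc_right hx.2.le)).intervalIntegrable_of_Icc hx.1
  have hmeas : StronglyMeasurableAtFilter g (𝓝[>] x) :=
    ⟨Icc a b, hIcc, hg.aestronglyMeasurable measurableSet_Icc⟩
  have hcont : ContinuousWithinAt g (Ioi x) x :=
    (hg x (Ico_subset_Icc_self hx)).mono_of_mem_nhdsWithin hIcc
  exact intervalIntegral.integral_hasDerivWithinAt_right hint hmeas hcont

theorem eq_exp_integral_mul_of_hasDerivWithinAt (hg : ContinuousOn g (Icc a b))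
    (hfc : ContinuousOn f (Icc a b))
    (hf : ∀ x ∈ Ico a b, HasDerivWithinAt f (g x * f x) (Ici x) x) :
    ∀ t ∈ Icc a b, f t = exp (∫ s in a..t, g s) * f a := by
  set G : ℝ → ℝ := fun t => ∫ s in a..t, g s
  have hGc : ContinuousOn G (Icc a b) := fun t ht => by
    rw [← uIcc_of_le (ht.1.trans ht.2)] at hg
    exact (intervalIntegral.continuousOn_primitive_interval hg.integrableOn_uIcc).mono
      Icc_subset_uIcc t ht
  have hconst : ∀ t ∈ Icc a b, f t * exp (-G t) = f a * exp (-G a) := by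
    refine constant_of_has_deriv_right_zero (hfc.mul hGc.neg.rexp) fun x hx => ?_
    have hG := (hasDerivWithinAt_integral_Ici_of_continuousOn hg hx).neg.exp
    exact ((hf x hx).mul hG).congr_deriv (by ring)
  intro t ht
  have h := hconst t ht
  simp only [G, intervalIntegral.integral_same, neg_zero, exp_zero, mul_one] at h
  rw [← h, mul_left_comm, ← exp_add, add_neg_cancel, exp_zero, mul_one]

theorem nonneg_of_hasDerivWithinAt_eq_mul_self (hg : ContinuousOn g (Icc a b))
    (hfc : ContinuousOn f (Icc a b))
    (hf : ∀ x ∈ Ico a b, HasDerivWithinAt f (g x * f x) (Ici x) x) (ha : 0 ≤ f a) :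
    ∀ t ∈ Icc a b, 0 ≤ f t := fun t ht => by
  rw [eq_exp_integral_mul_of_hasDerivWithinAt hg hfc hf t ht]
  positivity

end LinearODE

theorem stmt_15_general (T : ℝ) (A B C : ℝ → ℝ)
    (hA : ∀ t ∈ Set.Ico (0 : ℝ) T, HasDerivAt A
      (-(2/3) * (-(A t) ^ 2 * (2 * A t + B t + C t) + A t * (B t - C t) ^ 2)) t)
    (hB : ∀ t ∈ Set.Ico (0 : ℝ) T, HasDerivAt B
      (-(2/3) * (-(B t) ^ 2 * (2 * B t + A t - C t) + B t * (A t + C t) ^ 2)) t)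
    (hC : ∀ t ∈ Set.Ico (0 : ℝ) T, HasDerivAt C
      (-(2/3) * (-(C t) ^ 2 * (2 * C t + A t - B t) + C t * (A t + B t) ^ 2)) t) :
    (∀ t ∈ Set.Ico (0 : ℝ) T,
      HasDerivAt (fun s => B s - C s)
        ((2/3) * (2 * ((B t) ^ 3 - (C t) ^ 3) + A t * ((B t) ^ 2 - (C t) ^ 2)
          - (A t) ^ 2 * (B t - C t))) t) ∧
    (C 0 ≤ B 0 → ∀ t ∈ Set.Ico (0 : ℝ) T, C t ≤ B t) := by
  have hderiv : ∀ t ∈ Ico (0 : ℝ) T, HasDerivAt (fun s => B s - C s)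
      ((2/3) * (2 * ((B t) ^ 3 - (C t) ^ 3) + A t * ((B t) ^ 2 - (C t) ^ 2)
        - (A t) ^ 2 * (B t - C t))) t :=
    fun t ht => ((hB t ht).sub (hC t ht)).congr_deriv (by ring)
  refine ⟨hderiv, fun h0 t ht => ?_⟩
  have hsub : Icc 0 t ⊆ Ico 0 T := Icc_subset_Ico_right ht.2
  have hcont : ∀ s ∈ Icc 0 t, ContinuousAt A s ∧ ContinuousAt B s ∧ ContinuousAt C s :=
    fun s hs => ⟨(hA s (hsub hs)).continuousAt, (hB s (hsub hs)).continuousAt,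
      (hC s (hsub hs)).continuousAt⟩
  set g : ℝ → ℝ := fun s =>
    (2/3) * (2 * (B s ^ 2 + B s * C s + C s ^ 2) + A s * (B s + C s) - A s ^ 2)
  have hgc : ContinuousOn g (Icc 0 t) := fun s hs => by
    obtain ⟨_, _, _⟩ := hcont s hs
    exact ContinuousAt.continuousWithinAt (by fun_prop)
  have hfc : ContinuousOn (fun s => B s - C s) (Icc 0 t) := fun s hs =>
    ((hcont s hs).2.1.sub (hcont s hs).2.2).continuousWithinAt
  have hlin : ∀ s ∈ Ico 0 t,
      HasDerivWithinAt (fun s => B s - C s) (g s * (B s - C s)) (Ici s) s :=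
    fun s hs => ((hderiv s (hsub (Ico_subset_Icc_self hs))).congr_deriv (by ring)).hasDerivWithinAt
  exact sub_nonneg.1 <|
    nonneg_of_hasDerivWithinAt_eq_mul_self hgc hfc hlin (sub_nonneg.2 h0) t ⟨ht.1, le_rfl⟩

/-- SL(2,ℝ): `(d/dt)(B-C) = (2/3)[2(B³-C³) + A(B²-C²) - A²(B-C)]`; hence if
`B(0) ≥ C(0)` then `B(t) ≥ C(t)` for all `t ∈ [0,T₊)`. -/
theorem stmt_15 (T : ℝ) (hT : 0 < T) (A B C : ℝ → ℝ)
    (hApos : ∀ t ∈ Set.Ico (0 : ℝ) T, 0 < A t)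
    (hBpos : ∀ t ∈ Set.Ico (0 : ℝ) T, 0 < B t)
    (hCpos : ∀ t ∈ Set.Ico (0 : ℝ) T, 0 < C t)
    (hA : ∀ t ∈ Set.Ico (0 : ℝ) T, HasDerivAt A
      (-(2/3) * (-(A t) ^ 2 * (2 * A t + B t + C t) + A t * (B t - C t) ^ 2)) t)
    (hB : ∀ t ∈ Set.Ico (0 : ℝ) T, HasDerivAt B
      (-(2/3) * (-(B t) ^ 2 * (2 * B t + A t - C t) + B t * (A t + C t) ^ 2)) t)
    (hC : ∀ t ∈ Set.Ico (0 : ℝ) T, HasDerivAt C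
      (-(2/3) * (-(C t) ^ 2 * (2 * C t + A t - B t) + C t * (A t + B t) ^ 2)) t) :
    (∀ t ∈ Set.Ico (0 : ℝ) T,
      HasDerivAt (fun s => B s - C s)
        ((2/3) * (2 * ((B t) ^ 3 - (C t) ^ 3) + A t * ((B t) ^ 2 - (C t) ^ 2)
          - (A t) ^ 2 * (B t - C t))) t) ∧
    (C 0 ≤ B 0 → ∀ t ∈ Set.Ico (0 : ℝ) T, C t ≤ B t) :=
  stmt_15_general T A B C hA hB hC
end

section
/- Let A, B, C : [0,T₊) → (0,∞) satisfy the SL(2,ℝ) backward Ricci flow system, and suppose B(t) ≥ C(t) for all t. Then (d/dt) ln(A/C) = 2(A+B-C)(A+C) > 0; hence if A(t₁) > C(t₁) for some t₁, then A(t) > C(t) for all t ≥ t₁. -/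
/-!
Along the flow, `(log A)' - (log C)'` simplifies to `2 (A + B - C)(A + C)`, which is positive as
soon as `A, C > 0` and `B ≥ C`. Hence `log (A / C)` is strictly increasing, and the condition
`A > C`, i.e. `log (A / C) > 0`, persists forward in time.
-/

open Real Set

theorem hasDerivAt_log_div {f g : ℝ → ℝ} {f' g' x : ℝ} (hf : HasDerivAt f f' x)
    (hg : HasDerivAt g g' x) (hfx : f x ≠ 0) (hgx : g x ≠ 0) :
    HasDerivAt (fun y => log (f y / g y)) (f' / f x - g' / g x) x := by
  convert (hf.div hg hgx).log (div_ne_zero hfx hgx) using 1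
  · rfl
  · rw [Pi.div_apply]
    field_simp

theorem strictMonoOn_of_hasDerivAt_pos {D : Set ℝ} (hD : Convex ℝ D) {f f' : ℝ → ℝ}
    (hf : ∀ x ∈ D, HasDerivAt f (f' x) x) (hf'₀ : ∀ x ∈ D, 0 < f' x) : StrictMonoOn f D :=
  strictMonoOn_of_hasDerivWithinAt_pos hD (fun x hx => (hf x hx).continuousAt.continuousWithinAt)
    (fun x hx => (hf x (interior_subset hx)).hasDerivWithinAt)
    (fun x hx => hf'₀ x (interior_subset hx))

theorem lt_of_monotoneOn_log_div {s : Set ℝ} {f g : ℝ → ℝ}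
    (hmono : MonotoneOn (fun x => log (f x / g x)) s)
    (hf : ∀ x ∈ s, 0 < f x) (hg : ∀ x ∈ s, 0 < g x) {a b : ℝ} (ha : a ∈ s) (hb : b ∈ s)
    (hab : a ≤ b) (hlt : g a < f a) : g b < f b := by
  have hlog_a : 0 < log (f a / g a) := log_pos ((one_lt_div (hg a ha)).mpr hlt)
  have hlog_b : 0 < log (f b / g b) := hlog_a.trans_le (hmono ha hb hab)
  rw [log_pos_iff (div_pos (hf b hb) (hg b hb)).le, one_lt_div (hg b hb)] at hlog_b
  exact hlog_b

theorem sl2_logRatio_rate {A B C : ℝ} (hA : A ≠ 0) (hC : C ≠ 0) :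
    -(2/3) * (-A ^ 2 * (2 * A + B + C) + A * (B - C) ^ 2) / A
      - -(2/3) * (-C ^ 2 * (2 * C + A - B) + C * (A + B) ^ 2) / C
      = 2 * (A + B - C) * (A + C) := by
  field_simp
  ring

theorem stmt_16_general (T : ℝ) (A B C : ℝ → ℝ)
    (hApos : ∀ t ∈ Set.Ico (0 : ℝ) T, 0 < A t)
    (hCpos : ∀ t ∈ Set.Ico (0 : ℝ) T, 0 < C t)
    (hBC : ∀ t ∈ Set.Ico (0 : ℝ) T, C t ≤ B t)
    (hA : ∀ t ∈ Set.Ico (0 : ℝ) T, HasDerivAt A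
      (-(2/3) * (-(A t) ^ 2 * (2 * A t + B t + C t) + A t * (B t - C t) ^ 2)) t)
    (hC : ∀ t ∈ Set.Ico (0 : ℝ) T, HasDerivAt C
      (-(2/3) * (-(C t) ^ 2 * (2 * C t + A t - B t) + C t * (A t + B t) ^ 2)) t) :
    (∀ t ∈ Set.Ico (0 : ℝ) T,
      HasDerivAt (fun s => Real.log (A s / C s))
        (2 * (A t + B t - C t) * (A t + C t)) t ∧
      0 < 2 * (A t + B t - C t) * (A t + C t)) ∧
    (∀ t₁ ∈ Set.Ico (0 : ℝ) T, C t₁ < A t₁ →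
      ∀ t ∈ Set.Ico (0 : ℝ) T, t₁ ≤ t → C t < A t) := by
  have hderiv : ∀ t ∈ Ico (0 : ℝ) T, HasDerivAt (fun s => log (A s / C s))
      (2 * (A t + B t - C t) * (A t + C t)) t := fun t ht => by
    have hAt := (hApos t ht).ne'
    have hCt := (hCpos t ht).ne'
    simpa only [sl2_logRatio_rate hAt hCt] using hasDerivAt_log_div (hA t ht) (hC t ht) hAt hCt
  have hrate_pos : ∀ t ∈ Ico (0 : ℝ) T, 0 < 2 * (A t + B t - C t) * (A t + C t) := fun t ht => by
    have := hApos t ht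
    have := hCpos t ht
    have := hBC t ht
    exact mul_pos (mul_pos two_pos (by linarith)) (by linarith)
  have hmono := (strictMonoOn_of_hasDerivAt_pos (convex_Ico 0 T) hderiv hrate_pos).monotoneOn
  exact ⟨fun t ht => ⟨hderiv t ht, hrate_pos t ht⟩,
    fun t₁ ht₁ hlt t ht hle => lt_of_monotoneOn_log_div hmono hApos hCpos ht₁ ht hle hlt⟩

/-- SL(2,ℝ) with `B ≥ C`: `(d/dt) ln(A/C) = 2(A+B-C)(A+C) > 0`; hence if
`A(t₁) > C(t₁)` for some `t₁`, then `A(t) > C(t)` for all `t ≥ t₁`. -/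
theorem stmt_16 (T : ℝ) (hT : 0 < T) (A B C : ℝ → ℝ)
    (hApos : ∀ t ∈ Set.Ico (0 : ℝ) T, 0 < A t)
    (hBpos : ∀ t ∈ Set.Ico (0 : ℝ) T, 0 < B t)
    (hCpos : ∀ t ∈ Set.Ico (0 : ℝ) T, 0 < C t)
    (hBC : ∀ t ∈ Set.Ico (0 : ℝ) T, C t ≤ B t)
    (hA : ∀ t ∈ Set.Ico (0 : ℝ) T, HasDerivAt A
      (-(2/3) * (-(A t) ^ 2 * (2 * A t + B t + C t) + A t * (B t - C t) ^ 2)) t)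
    (hB : ∀ t ∈ Set.Ico (0 : ℝ) T, HasDerivAt B
      (-(2/3) * (-(B t) ^ 2 * (2 * B t + A t - C t) + B t * (A t + C t) ^ 2)) t)
    (hC : ∀ t ∈ Set.Ico (0 : ℝ) T, HasDerivAt C
      (-(2/3) * (-(C t) ^ 2 * (2 * C t + A t - B t) + C t * (A t + B t) ^ 2)) t) :
    (∀ t ∈ Set.Ico (0 : ℝ) T,
      HasDerivAt (fun s => Real.log (A s / C s))
        (2 * (A t + B t - C t) * (A t + C t)) t ∧
      0 < 2 * (A t + B t - C t) * (A t + C t)) ∧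
    (∀ t₁ ∈ Set.Ico (0 : ℝ) T, C t₁ < A t₁ →
      ∀ t ∈ Set.Ico (0 : ℝ) T, t₁ ≤ t → C t < A t) :=
  stmt_16_general T A B C hApos hCpos hBC hA hC
end
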